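/- Let $Q$ be a projection on finite-dimensional system $K$, $P$ a nonnegative operator on $K'$ with $P^2 \le P$, $V$ a unitary on $K\otimes R = K'\otimes R'$, $\rho$ a state on $K$, $\rho_R$ a state on $R$, and $\mathcal{L}(\cdot) = \mathrm{tr}_{R'}[V(\cdot\otimes\rho_R)V^\dagger]$. Define $N = V^\dagger(P\otimes 1_{R'})V - Q\otimes 1_R$. If $\langle\mathcal{L}^\dagger(P)\rangle_{(1-Q)\rho(1-Q)} + \langle 1-\mathcal{L}^\dagger(P)\rangle_{Q\rho Q} = \varepsilon^2$, then $V_{\rho\otimes\rho_R}(N) \le \varepsilon^2$. -/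

import Mathlib

/-!
Write the observable as `N = M - E` with `M = V†(P ⊗ 1)V` and `E = Q ⊗ 1`. Since `V` is unitary,
`M - M² = V†((P - P²) ⊗ 1)V ≥ 0`, and `E` is idempotent, so expanding `(M - E)²` gives
`tr σN² = ε² - tr σ(M - M²) ≤ ε²` for `σ = ρ ⊗ ρ_R`; the variance is at most this second moment.
-/

open Matrix
open scoped Kronecker ComplexOrder

variable {n m : Type*} [Fintype n] [DecidableEq n] [Fintype m] [DecidableEq m]

open Classical in
/-- square root of a matrix (zero if not PSD) -/
noncomputable def msqrt (A : Matrix n n ℂ) : Matrix n n ℂ :=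
  if h : A.PosSemidef then
    (h.1.eigenvectorUnitary : Matrix n n ℂ) * diagonal ((↑) ∘ (Real.sqrt ∘ h.1.eigenvalues)) *
      (star h.1.eigenvectorUnitary : Matrix n n ℂ) else 0

/-- trace norm -/
noncomputable def traceNorm (X : Matrix n m ℂ) : ℝ :=
  ((msqrt (Xᴴ * X)).trace).re

def IsDensity (ρ : Matrix n n ℂ) : Prop := ρ.PosSemidef ∧ ρ.trace = 1

noncomputable def variance (σ A : Matrix n n ℂ) : ℝ :=
  (Matrix.trace (σ * (A * A))).re - ((Matrix.trace (σ * A)).re) ^ 2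

/-- `L` is a symmetric logarithmic derivative for `(σ, W)`. -/
def IsSLD (σ W L : Matrix n n ℂ) : Prop :=
  L.IsHermitian ∧ L * σ + σ * L = ((-2 : ℂ) * Complex.I) • (W * σ - σ * W)

/-- SLD Fisher information value associated with a given SLD `L`. -/
noncomputable def fisherVal (σ L : Matrix n n ℂ) : ℝ :=
  (Matrix.trace (σ * (L * L))).re

noncomputable def fidelity (ρ σ : Matrix n n ℂ) : ℝ :=
  ((msqrt (msqrt ρ * σ * msqrt ρ)).trace).re

noncomputable def purifiedDist (ρ σ : Matrix n n ℂ) : ℝ :=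
  Real.sqrt (1 - fidelity ρ σ ^ 2)

/-- completely positive -/
def IsCompletelyPositive (Φ : Matrix n n ℂ →ₗ[ℂ] Matrix m m ℂ) : Prop :=
  ∀ (k : ℕ) (M : Matrix (Fin k × n) (Fin k × n) ℂ), M.PosSemidef →
    (Matrix.of fun (p q : Fin k × m) => (Φ (Matrix.of fun i j => M (p.1, i) (q.1, j))) p.2 q.2).PosSemidef

def IsCPTP (Φ : Matrix n n ℂ →ₗ[ℂ] Matrix m m ℂ) : Prop :=
  IsCompletelyPositive Φ ∧ ∀ X, (Φ X).trace = X.trace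

/-- partial trace over the second factor -/
noncomputable def ptraceR {k r : Type*} [Fintype k] [Fintype r]
    (M : Matrix (k × r) (k × r) ℂ) : Matrix k k ℂ :=
  Matrix.of fun i j => ∑ a : r, M (i, a) (j, a)

namespace Matrix

variable {ι κ ι' κ' R : Type*}

theorem sub_kronecker [Ring R] (A₁ A₂ : Matrix ι κ R) (B : Matrix ι' κ' R) :
    (A₁ - A₂) ⊗ₖ B = A₁ ⊗ₖ B - A₂ ⊗ₖ B := by
  ext
  simp [sub_mul]

theorem one_sub_kronecker_one [Ring R] [DecidableEq ι] [DecidableEq ι'] (A : Matrix ι ι R) :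
    (1 - A) ⊗ₖ (1 : Matrix ι' ι' R) = 1 - A ⊗ₖ 1 := by
  rw [sub_kronecker, one_kronecker_one]

variable [Fintype ι] [CommRing R]

theorem conj_one_sub [DecidableEq ι] [DecidableEq κ] {W : Matrix κ ι R} {V : Matrix ι κ R}
    (h : W * V = 1) (A : Matrix ι ι R) : W * (1 - A) * V = 1 - W * A * V := by
  rw [Matrix.mul_sub, Matrix.sub_mul, Matrix.mul_one, h]

variable [Fintype κ]

theorem mul_mul_kronecker [DecidableEq κ] (A B X : Matrix ι ι R) (Y : Matrix κ κ R) :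
    (A * X * B) ⊗ₖ Y = (A ⊗ₖ 1) * (X ⊗ₖ Y) * (B ⊗ₖ 1) := by
  rw [← mul_kronecker_mul, ← mul_kronecker_mul, Matrix.one_mul, Matrix.mul_one]

theorem IsIdempotentElem.kronecker {A : Matrix ι ι R} {B : Matrix κ κ R}
    (hA : IsIdempotentElem A) (hB : IsIdempotentElem B) : IsIdempotentElem (A ⊗ₖ B) := by
  rw [IsIdempotentElem, ← mul_kronecker_mul, hA.eq, hB.eq]

theorem trace_mul_conj (A : Matrix ι ι R) (W : Matrix κ ι R) (X : Matrix κ κ R)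
    (V : Matrix ι κ R) : trace (A * (V * X * W)) = trace (W * A * V * X) := by
  rw [← Matrix.mul_assoc, trace_mul_cycle, ← Matrix.mul_assoc]

theorem conj_mul_conj [DecidableEq ι] {W : Matrix κ ι R} {V : Matrix ι κ R}
    (h : V * W = 1) (A B : Matrix ι ι R) : W * A * V * (W * B * V) = W * (A * B) * V := by
  simp only [Matrix.mul_assoc]
  rw [← Matrix.mul_assoc V, h, Matrix.one_mul]

theorem trace_mul_sq_sub_idempotent [DecidableEq ι] (σ M : Matrix ι ι R) {E : Matrix ι ι R}
    (hE : IsIdempotentElem E) :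
    trace (σ * ((M - E) * (M - E))) = trace (M * ((1 - E) * σ * (1 - E))) +
      trace ((1 - M) * (E * σ * E)) - trace ((M - M * M) * σ) := by
  have e1 : trace (σ * (M * M)) = trace (M * (M * σ)) := by
    rw [trace_mul_comm, Matrix.mul_assoc]
  have e2 : trace (σ * (M * E)) = trace (M * (E * σ)) := by
    rw [trace_mul_comm, Matrix.mul_assoc]
  have e3 : trace (σ * (E * M)) = trace (M * (σ * E)) := by
    rw [← Matrix.mul_assoc, trace_mul_comm]
  have e4 : trace (E * (σ * E)) = trace (σ * E) := by
    rw [trace_mul_comm, Matrix.mul_assoc, hE.eq]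
  have e5 : trace (σ * (E * E)) = trace (σ * E) := by rw [hE.eq]
  simp only [Matrix.sub_mul, Matrix.mul_sub, Matrix.one_mul, Matrix.mul_one, trace_sub,
    Matrix.mul_assoc]
  linear_combination e1 - e2 - e3 - e4 + e5

open scoped MatrixOrder in
theorem PosSemidef.trace_mul_nonneg {𝕜 : Type*} [RCLike 𝕜] {A B : Matrix ι ι 𝕜}
    (hA : A.PosSemidef) (hB : B.PosSemidef) : 0 ≤ (A * B).trace := by
  classical
  obtain ⟨C, rfl⟩ := CStarAlgebra.nonneg_iff_eq_star_mul_self.mp hB.nonneg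
  rw [← Matrix.mul_assoc, trace_mul_comm, ← Matrix.mul_assoc, star_eq_conjTranspose]
  exact (hA.mul_mul_conjTranspose_same C).trace_nonneg

end Matrix

theorem variance_le_re_trace_mul_sq {ι : Type*} [Fintype ι] (σ A : Matrix ι ι ℂ) :
    variance σ A ≤ (trace (σ * (A * A))).re :=
  sub_le_self _ (sq_nonneg _)

theorem variance_sub_idempotent_le {ι : Type*} [Fintype ι] [DecidableEq ι]
    {σ M E : Matrix ι ι ℂ} (hσ : σ.PosSemidef) (hM : (M - M * M).PosSemidef)
    (hE : IsIdempotentElem E) :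
    variance σ (M - E) ≤
      (trace (M * ((1 - E) * σ * (1 - E)))).re + (trace ((1 - M) * (E * σ * E))).re := by
  have hdefect : 0 ≤ (trace ((M - M * M) * σ)).re :=
    (Complex.nonneg_iff.mp (hM.trace_mul_nonneg hσ)).1
  have hsq := congrArg Complex.re (trace_mul_sq_sub_idempotent σ M hE)
  simp only [Complex.add_re, Complex.sub_re] at hsq
  linarith [variance_le_re_trace_mul_sq σ (M - E)]

theorem variance_N_le_epsilon_sq_general
    {k r k' r' : Type*} [Fintype k] [DecidableEq k] [Fintype r] [DecidableEq r]
    [Fintype k'] [DecidableEq k'] [Fintype r'] [DecidableEq r']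
    (V : Matrix (k' × r') (k × r) ℂ) (hV1 : Vᴴ * V = 1) (hV2 : V * Vᴴ = 1)
    (Q : Matrix k k ℂ) (hQp : Q * Q = Q)
    (P : Matrix k' k' ℂ) (hP2 : (P - P * P).PosSemidef)
    (ρ : Matrix k k ℂ) (hρ : IsDensity ρ) (ρR : Matrix r r ℂ) (hρR : IsDensity ρR)
    (ε : ℝ)
    (hε : (Matrix.trace ((P ⊗ₖ (1 : Matrix r' r' ℂ)) *
            (V * ((((1 - Q) * ρ * (1 - Q)) ⊗ₖ ρR)) * Vᴴ))).re +
          (Matrix.trace (((1 : Matrix (k' × r') (k' × r') ℂ) - P ⊗ₖ (1 : Matrix r' r' ℂ)) *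
            (V * (((Q * ρ * Q) ⊗ₖ ρR)) * Vᴴ))).re = ε ^ 2) :
    variance (ρ ⊗ₖ ρR)
      (Vᴴ * (P ⊗ₖ (1 : Matrix r' r' ℂ)) * V - Q ⊗ₖ (1 : Matrix r r ℂ)) ≤ ε ^ 2 := by
  rw [trace_mul_conj _ Vᴴ, trace_mul_conj _ Vᴴ, conj_one_sub hV1, mul_mul_kronecker,
    mul_mul_kronecker, one_sub_kronecker_one] at hε
  set M := Vᴴ * (P ⊗ₖ (1 : Matrix r' r' ℂ)) * V with hM_def
  have hM : M - M * M = Vᴴ * ((P - P * P) ⊗ₖ (1 : Matrix r' r' ℂ)) * V := by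
    rw [hM_def, conj_mul_conj hV2, ← mul_kronecker_mul, Matrix.one_mul, sub_kronecker,
      Matrix.mul_sub, Matrix.sub_mul]
  have hM_psd : (M - M * M).PosSemidef := by
    simpa [hM] using (hP2.kronecker PosSemidef.one).conjTranspose_mul_mul_same V
  exact hε ▸ variance_sub_idempotent_le (hρ.1.kronecker hρR.1) hM_psd
    (IsIdempotentElem.kronecker hQp IsIdempotentElem.one)

/-- Variance bound for `N = V†(P⊗1)V - Q⊗1` in terms of the measurement error ε. -/
theorem variance_N_le_epsilon_sq
    {k r k' r' : Type*} [Fintype k] [DecidableEq k] [Fintype r] [DecidableEq r]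
    [Fintype k'] [DecidableEq k'] [Fintype r'] [DecidableEq r']
    (V : Matrix (k' × r') (k × r) ℂ) (hV1 : Vᴴ * V = 1) (hV2 : V * Vᴴ = 1)
    (Q : Matrix k k ℂ) (hQh : Q.IsHermitian) (hQp : Q * Q = Q)
    (P : Matrix k' k' ℂ) (hP : P.PosSemidef) (hP2 : (P - P * P).PosSemidef)
    (ρ : Matrix k k ℂ) (hρ : IsDensity ρ) (ρR : Matrix r r ℂ) (hρR : IsDensity ρR)
    (ε : ℝ)
    (hε : (Matrix.trace ((P ⊗ₖ (1 : Matrix r' r' ℂ)) *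
            (V * ((((1 - Q) * ρ * (1 - Q)) ⊗ₖ ρR)) * Vᴴ))).re +
          (Matrix.trace (((1 : Matrix (k' × r') (k' × r') ℂ) - P ⊗ₖ (1 : Matrix r' r' ℂ)) *
            (V * (((Q * ρ * Q) ⊗ₖ ρR)) * Vᴴ))).re = ε ^ 2) :
    variance (ρ ⊗ₖ ρR)
      (Vᴴ * (P ⊗ₖ (1 : Matrix r' r' ℂ)) * V - Q ⊗ₖ (1 : Matrix r r ℂ)) ≤ ε ^ 2 :=
  variance_N_le_epsilon_sq_general V hV1 hV2 Q hQp P hP2 ρ hρ ρR hρR ε hε
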